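/- arXiv:2011.12945 — 3 statements merged into one kernel-verified Lean document; each statement's English description precedes it below -/
import Mathlib

section
/- Let f₁, ..., f_m : ℝ → ℝ be a linearly independent family of continuous functions. Then there exist points c₁, ..., c_m ∈ ℝ such that the m × m matrix A with entries A_{ji} = f_i(c_j) is nonsingular. -/
/-!
Let `E x = (f₁ x, …, f_m x) ∈ ℝᵐ`. A linear functional `φ` vanishing on every `E x` gives the
relation `∑ φ(eᵢ) fᵢ = 0`, so linear independence forces `φ = 0`: the vectors `E x` span `ℝᵐ`.
A spanning set contains a basis, which has `m` elements `E c₁, …, E c_m`; these are the rows of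
the matrix `(f_i(c_j))`, which is therefore nonsingular.
-/

open Submodule

variable {K X ι : Type*} [Field K] [Fintype ι]

theorem span_range_eval_eq_top_of_linearIndependent {f : ι → X → K}
    (hf : LinearIndependent K f) : span K (Set.range fun x i => f i x) = ⊤ := by
  classical
  by_contra hne
  obtain ⟨φ, hφ_ne, hφ⟩ :=
    exists_dual_map_eq_bot_of_lt_top (lt_top_iff_ne_top.mpr hne) inferInstance
  have hvanish (x : X) : φ (fun i => f i x) = 0 := by
    have hmem : φ (fun i => f i x) ∈ (span K (Set.range fun x i => f i x)).map φ :=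
      mem_map_of_mem (subset_span ⟨x, rfl⟩)
    rwa [hφ, mem_bot] at hmem
  have hrel : ∑ i, φ (Pi.single i 1) • f i = 0 := by
    funext x
    have h := hvanish x
    rw [pi_eq_sum_univ' (fun i => f i x), map_sum] at h
    simpa [mul_comm] using h
  have hcoeff := Fintype.linearIndependent_iff.mp hf _ hrel
  exact hφ_ne (LinearMap.pi_ext' fun i => LinearMap.ext_ring (by simpa using hcoeff i))

theorem exists_det_ne_zero_of_span_range_eq_top [DecidableEq ι] {v : X → ι → K}
    (hv : span K (Set.range v) = ⊤) : ∃ c : ι → X, (Matrix.of fun j => v (c j)).det ≠ 0 := by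
  let b₀ := Module.Basis.ofSpan hv.ge
  let b := b₀.reindex (b₀.indexEquiv (Pi.basisFun K ι))
  have hb : ∀ j, ∃ x, v x = b j := fun j =>
    Module.Basis.ofSpan_subset hv.ge ⟨_, (b₀.reindex_apply _ j).symm⟩
  choose c hc using hb
  refine ⟨c, ?_⟩
  have hrows : (Matrix.of fun j => v (c j)).row = b := funext hc
  have hunit := Matrix.linearIndependent_rows_iff_isUnit.mp (hrows ▸ b.linearIndependent)
  exact ((Matrix.isUnit_iff_isUnit_det _).mp hunit).ne_zero

theorem stmt_6_general {m : ℕ} (f : Fin m → ℝ → ℝ)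
    (hli : LinearIndependent ℝ f) :
    ∃ c : Fin m → ℝ, (Matrix.of fun j i => f i (c j)).det ≠ 0 :=
  exists_det_ne_zero_of_span_range_eq_top (span_range_eval_eq_top_of_linearIndependent hli)

/-- For a linearly independent family of continuous functions `f₁, …, f_m : ℝ → ℝ`
there exist points `c₁, …, c_m` such that the matrix `(f_i(c_j))` is nonsingular. -/
theorem stmt_6 {m : ℕ} (f : Fin m → ℝ → ℝ)
    (hcont : ∀ i, Continuous (f i))
    (hli : LinearIndependent ℝ f) :
    ∃ c : Fin m → ℝ, (Matrix.of fun j i => f i (c j)).det ≠ 0 :=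
  stmt_6_general f hli
end

section
/- For k ≥ 1, the family of 3k functions on ℝ given by f_i(x) = (1/2)·erfc((μ_i − x)/(√2 σ_i)) for 1 ≤ i ≤ k, g_i(x) = −(m_i/(√(2π) σ_i))·exp(−(x − μ_i)²/(2σ_i²)) for 1 ≤ i ≤ k, and h_i(x) = (m_i (μ_i − x)/(2√(2π) σ_i³))·exp(−(x − μ_i)²/(2σ_i²)) for 1 ≤ i ≤ k, is linearly independent, provided the pairs (μ_i, σ_i) are pairwise distinct and all m_i ≠ 0, σ_i > 0. -/
open Real

/-- The complementary error function `erfc x = (2/√π) ∫_x^∞ e^{-t²} dt`. -/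
noncomputable def erfc (x : ℝ) : ℝ :=
  (2 / Real.sqrt Real.pi) * ∫ t in Set.Ioi x, Real.exp (-t ^ 2)

/-!
Differentiating a vanishing combination `∑ aᵢ fᵢ + bᵢ gᵢ + cᵢ hᵢ` removes the `erfc` terms: the
derivative of `aᵢ fᵢ + bᵢ gᵢ + cᵢ hᵢ` is a polynomial `Pᵢ` of degree at most two times the
Gaussian `exp (-(x - μᵢ)² / (2σᵢ²)) = Kᵢ exp (αᵢ x² + βᵢ x)`, and the pairs `(αᵢ, βᵢ)` are
distinct because the `(μᵢ, σᵢ)` are and `σᵢ > 0`.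

Polynomials times exponentials of quadratics with distinct `(α, β)` are independent: divide by the
exponential whose `(α, β)` is lexicographically largest among the terms with `Pᵢ ≠ 0`; every other
term tends to `0` as `x → ∞`, hence so does that polynomial, which is therefore `0`.
Finally `Pᵢ = 0` forces `aᵢ = bᵢ = cᵢ = 0`, since `mᵢ ≠ 0`.
-/

open Filter Polynomial Topology

lemma tendsto_pow_mul_exp_quadratic_atTop (n : ℕ) {α β : ℝ} (h : α < 0 ∨ α = 0 ∧ β < 0) :
    Tendsto (fun x : ℝ => x ^ n * exp (α * x ^ 2 + β * x)) atTop (𝓝 0) := by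
  rcases h with hα | ⟨rfl, hβ⟩
  · have hquad : Tendsto (fun x : ℝ => x * (α * x + (β + 1))) atTop atBot :=
      tendsto_id.atTop_mul_atBot₀ <| tendsto_atBot_add_const_right _ _ <|
        (tendsto_const_mul_atBot_of_neg hα).mpr tendsto_id
    have := (tendsto_pow_mul_exp_neg_atTop_nhds_zero n).mul (tendsto_exp_atBot.comp hquad)
    rw [mul_zero] at this
    refine this.congr fun x => ?_
    rw [Function.comp_apply, mul_assoc, ← exp_add]
    ring_nf
  · have := (isLittleO_pow_exp_pos_mul_atTop n (neg_pos.mpr hβ)).tendsto_div_nhds_zero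
    refine this.congr fun x => ?_
    rw [div_eq_mul_inv, ← exp_neg]
    ring_nf

lemma tendsto_eval_mul_exp_quadratic_atTop (p : ℝ[X]) {α β : ℝ}
    (h : α < 0 ∨ α = 0 ∧ β < 0) :
    Tendsto (fun x : ℝ => p.eval x * exp (α * x ^ 2 + β * x)) atTop (𝓝 0) :=
  ((isBigO_atTop_of_degree_le p (X ^ p.natDegree) (by simp [degree_le_natDegree])).mul
    (Asymptotics.isBigO_refl _ _)).trans_tendsto
    (by simpa using tendsto_pow_mul_exp_quadratic_atTop p.natDegree h)

section ExpQuadratic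

variable {ι : Type*} {α β : ι → ℝ} {p : ι → ℝ[X]}

lemma eval_eq_neg_sum_erase_mul_exp [DecidableEq ι] {t : Finset ι} {i₀ : ι} (hi₀ : i₀ ∈ t)
    {x : ℝ} (h : ∑ i ∈ t, (p i).eval x * exp (α i * x ^ 2 + β i * x) = 0) :
    (p i₀).eval x =
      -∑ i ∈ t.erase i₀, (p i).eval x * exp ((α i - α i₀) * x ^ 2 + (β i - β i₀) * x) := by
  have hscaled :
      ∑ i ∈ t, (p i).eval x * exp ((α i - α i₀) * x ^ 2 + (β i - β i₀) * x) = 0 := by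
    calc _ = (∑ i ∈ t, (p i).eval x * exp (α i * x ^ 2 + β i * x)) *
          exp (-(α i₀ * x ^ 2 + β i₀ * x)) := by
          rw [Finset.sum_mul]
          refine Finset.sum_congr rfl fun i _ => ?_
          rw [mul_assoc, ← exp_add]
          ring_nf
      _ = 0 := by rw [h, zero_mul]
  rw [← Finset.add_sum_erase t _ hi₀] at hscaled
  simpa [eq_neg_iff_add_eq_zero] using hscaled

theorem eq_zero_of_sum_eval_mul_exp_quadratic_eq_zero {s : Finset ι}
    (hinj : Set.InjOn (fun i => (α i, β i)) s)
    (h : ∀ x, ∑ i ∈ s, (p i).eval x * exp (α i * x ^ 2 + β i * x) = 0) :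
    ∀ i ∈ s, p i = 0 := by
  classical
  by_contra! hne
  set t := s.filter fun i => p i ≠ 0
  have ht : t.Nonempty := by
    obtain ⟨i, hi, hpi⟩ := hne
    exact ⟨i, Finset.mem_filter.2 ⟨hi, hpi⟩⟩
  have hsum (x : ℝ) : ∑ i ∈ t, (p i).eval x * exp (α i * x ^ 2 + β i * x) = 0 := by
    rw [Finset.sum_filter_of_ne fun i _ hi => by contrapose! hi; simp [hi], h]
  obtain ⟨i₀, hi₀, hmax⟩ := t.exists_max_image (fun i => toLex (α i, β i)) ht
  have hlt : ∀ i ∈ t.erase i₀, α i - α i₀ < 0 ∨ α i - α i₀ = 0 ∧ β i - β i₀ < 0 := by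
    intro i hi
    obtain ⟨hne, hit⟩ := Finset.mem_erase.1 hi
    have hlex : toLex (α i, β i) < toLex (α i₀, β i₀) :=
      (hmax i hit).lt_of_ne fun heq => hne <| hinj (Finset.mem_of_mem_filter i hit)
        (Finset.mem_of_mem_filter i₀ hi₀) (toLex.injective heq)
    rcases Prod.Lex.toLex_lt_toLex.1 hlex with hα | ⟨hα, hβ⟩
    · exact Or.inl (sub_neg.2 hα)
    · exact Or.inr ⟨sub_eq_zero.2 hα, sub_neg.2 hβ⟩
  have hlim : Tendsto (fun x => (p i₀).eval x) atTop (𝓝 0) := by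
    simp_rw [eval_eq_neg_sum_erase_mul_exp hi₀ (hsum _)]
    simpa using (tendsto_finsetSum _ fun i hi =>
      tendsto_eval_mul_exp_quadratic_atTop (p i) (hlt i hi)).neg
  exact (Finset.mem_filter.1 hi₀).2 (leadingCoeff_eq_zero.1 ((tendsto_nhds_iff (p i₀)).1 hlim).1)

end ExpQuadratic

theorem eq_zero_of_sum_eval_mul_gaussian_eq_zero {ι : Type*} {s : Finset ι} {μ σ : ι → ℝ}
    (hσ : ∀ i ∈ s, 0 < σ i) (hinj : Set.InjOn (fun i => (μ i, σ i)) s) {p : ι → ℝ[X]}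
    (h : ∀ x, ∑ i ∈ s, (p i).eval x * exp (-(x - μ i) ^ 2 / (2 * σ i ^ 2)) = 0) :
    ∀ i ∈ s, p i = 0 := by
  have hexp {i : ι} (hi : i ∈ s) (x : ℝ) : exp (-(x - μ i) ^ 2 / (2 * σ i ^ 2)) =
      exp (-μ i ^ 2 / (2 * σ i ^ 2)) * exp (-(2 * σ i ^ 2)⁻¹ * x ^ 2 + μ i / σ i ^ 2 * x) := by
    have := (hσ i hi).ne'
    rw [← exp_add]
    congr 1
    field_simp
    ring
  have hinj' : Set.InjOn (fun i => (-(2 * σ i ^ 2)⁻¹, μ i / σ i ^ 2)) s := by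
    intro i hi j hj hij
    obtain ⟨hα, hβ⟩ := Prod.mk.inj hij
    have hσij : σ i = σ j := by
      have := inv_injective (neg_injective hα)
      nlinarith [hσ i hi, hσ j hj]
    rw [hσij] at hβ
    exact hinj hi hj (Prod.ext ((div_left_inj' (pow_ne_zero 2 (hσ j hj).ne')).1 hβ) hσij)
  intro i hi
  have := eq_zero_of_sum_eval_mul_exp_quadratic_eq_zero hinj'
    (p := fun i => C (exp (-μ i ^ 2 / (2 * σ i ^ 2))) * p i) (fun x => by
      rw [← h x]
      refine Finset.sum_congr rfl fun i hi => ?_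
      rw [hexp hi, eval_mul, eval_C]
      ring) i hi
  simpa [exp_ne_zero] using this

lemma hasDerivAt_erfc (x : ℝ) : HasDerivAt erfc (-(2 / √π) * exp (-x ^ 2)) x := by
  have hint : MeasureTheory.Integrable fun t : ℝ => exp (-t ^ 2) := by
    simpa using integrable_exp_neg_mul_sq one_pos
  have herfc : erfc = fun y =>
      2 / √π * ((∫ t in Set.Ioi 0, exp (-t ^ 2)) - ∫ t in (0 : ℝ)..y, exp (-t ^ 2)) := by
    ext y
    rw [erfc, ← intervalIntegral.integral_Ioi_sub_Ioi' hint.integrableOn hint.integrableOn,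
      sub_sub_cancel]
  have hcont : Continuous fun t : ℝ => exp (-t ^ 2) := by fun_prop
  rw [herfc]
  simpa using (((hcont.integral_hasStrictDerivAt 0 x).hasDerivAt.const_sub _).const_mul (2 / √π))

section Gaussian

variable {μ σ : ℝ}

lemma hasDerivAt_exp_neg_sq_div (hσ : σ ≠ 0) (x : ℝ) :
    HasDerivAt (fun x => exp (-(x - μ) ^ 2 / (2 * σ ^ 2)))
      (-(x - μ) / σ ^ 2 * exp (-(x - μ) ^ 2 / (2 * σ ^ 2))) x := by
  have hexponent : HasDerivAt (fun x => -(x - μ) ^ 2 / (2 * σ ^ 2))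
      (-(2 * (x - μ) ^ 1 * 1) / (2 * σ ^ 2)) x :=
    (((hasDerivAt_id x).sub_const μ).pow 2).neg.div_const _
  refine hexponent.exp.congr_deriv ?_
  field_simp

lemma hasDerivAt_half_erfc (hσ : 0 < σ) (x : ℝ) :
    HasDerivAt (fun x => 1 / 2 * erfc ((μ - x) / (√2 * σ)))
      (1 / (√(2 * π) * σ) * exp (-(x - μ) ^ 2 / (2 * σ ^ 2))) x := by
  have hu : HasDerivAt (fun x => (μ - x) / (√2 * σ)) (-1 / (√2 * σ)) x :=
    ((hasDerivAt_id x).const_sub μ).div_const _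
  refine (((hasDerivAt_erfc _).comp x hu).const_mul (1 / 2 : ℝ)).congr_deriv ?_
  have hsq : ((μ - x) / (√2 * σ)) ^ 2 = (x - μ) ^ 2 / (2 * σ ^ 2) := by
    rw [div_pow, mul_pow, sq_sqrt zero_le_two]
    ring
  rw [neg_div, hsq, sqrt_mul zero_le_two]
  field_simp

noncomputable def mixtureDerivPoly (a b c m μ σ : ℝ) : ℝ[X] :=
  C (a / (√(2 * π) * σ)) + C (b * m / (√(2 * π) * σ ^ 3)) * (X - C μ) +
    C (c * m / (2 * √(2 * π) * σ ^ 5)) * ((X - C μ) ^ 2 - C (σ ^ 2))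

lemma hasDerivAt_erfc_gaussian_combination (a b c m : ℝ) (hσ : 0 < σ) (x : ℝ) :
    HasDerivAt (fun x => a * (1 / 2 * erfc ((μ - x) / (√2 * σ))) +
        (b * (-(m / (√(2 * π) * σ)) * exp (-(x - μ) ^ 2 / (2 * σ ^ 2))) +
          c * (m * (μ - x) / (2 * √(2 * π) * σ ^ 3) * exp (-(x - μ) ^ 2 / (2 * σ ^ 2)))))
      ((mixtureDerivPoly a b c m μ σ).eval x * exp (-(x - μ) ^ 2 / (2 * σ ^ 2))) x := by
  have hG := hasDerivAt_exp_neg_sq_div (μ := μ) hσ.ne' x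
  have hf := (hasDerivAt_half_erfc (μ := μ) hσ x).const_mul a
  have hg := (hG.const_mul (-(m / (√(2 * π) * σ)))).const_mul b
  have hh := (((((hasDerivAt_id x).const_sub μ).const_mul m).div_const
    (2 * √(2 * π) * σ ^ 3)).mul hG).const_mul c
  refine (hf.add (hg.add hh)).congr_deriv ?_
  have : √(2 * π) ≠ 0 := by positivity
  simp only [mixtureDerivPoly, eval_add, eval_mul, eval_sub, eval_pow, eval_C, eval_X, id]
  field_simp
  ring

lemma eq_zero_of_mixtureDerivPoly_eq_zero {a b c m : ℝ} (hm : m ≠ 0) (hσ : 0 < σ)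
    (h : mixtureDerivPoly a b c m μ σ = 0) : a = 0 ∧ b = 0 ∧ c = 0 := by
  have hval (x : ℝ) := congrArg (eval x) h
  simp only [mixtureDerivPoly, eval_add, eval_mul, eval_sub, eval_pow, eval_C, eval_X,
    eval_zero] at hval
  have ha : a / (√(2 * π) * σ) = 0 := by
    linear_combination (hval (μ + σ) + hval (μ - σ)) / 2
  have hb : b * m / (√(2 * π) * σ ^ 3) * σ = 0 := by
    linear_combination (hval (μ + σ) - hval (μ - σ)) / 2
  have hc : c * m / (2 * √(2 * π) * σ ^ 5) * σ ^ 2 = 0 := by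
    linear_combination ha - hval μ
  simp [hm, hσ.ne', (sqrt_pos.2 pi_pos).ne'] at ha hb hc
  exact ⟨ha, hb, hc⟩

end Gaussian

theorem stmt_7_general {k : ℕ} (μ σ m : Fin k → ℝ)
    (hσ : ∀ i, 0 < σ i) (hm : ∀ i, m i ≠ 0)
    (hdist : ∀ i j, i ≠ j → (μ i, σ i) ≠ (μ j, σ j)) :
    LinearIndependent ℝ
      (Sum.elim
        (fun i : Fin k => fun x : ℝ => (1 / 2) * erfc ((μ i - x) / (Real.sqrt 2 * σ i)))
        (Sum.elim
          (fun i : Fin k => fun x : ℝ =>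
            -(m i / (Real.sqrt (2 * Real.pi) * σ i)) * Real.exp (-(x - μ i) ^ 2 / (2 * (σ i) ^ 2)))
          (fun i : Fin k => fun x : ℝ =>
            (m i * (μ i - x) / (2 * Real.sqrt (2 * Real.pi) * (σ i) ^ 3))
              * Real.exp (-(x - μ i) ^ 2 / (2 * (σ i) ^ 2))))) := by
  rw [Fintype.linearIndependent_iff]
  intro w hw
  have hderiv (x : ℝ) : ∑ i, (mixtureDerivPoly (w (.inl i)) (w (.inr (.inl i)))
      (w (.inr (.inr i))) (m i) (μ i) (σ i)).eval x * exp (-(x - μ i) ^ 2 / (2 * σ i ^ 2)) = 0 := by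
    refine (HasDerivAt.fun_sum fun i _ =>
      hasDerivAt_erfc_gaussian_combination _ _ _ _ (hσ i) x).unique ?_
    convert hasDerivAt_const x (0 : ℝ) using 1
    funext y
    simpa [Fintype.sum_sum_type, Finset.sum_add_distrib] using congrFun hw y
  have hP := eq_zero_of_sum_eval_mul_gaussian_eq_zero (fun i _ => hσ i)
    (fun i _ j _ hij => by_contra fun hne => hdist i j hne hij) hderiv
  have habc i := eq_zero_of_mixtureDerivPoly_eq_zero (hm i) (hσ i) (hP i (Finset.mem_univ i))
  rintro (i | i | i)
  exacts [(habc i).1, (habc i).2.1, (habc i).2.2]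

/-- The `3k` functions `f_i(x) = (1/2) erfc((μ_i - x)/(√2 σ_i))`,
`g_i(x) = -(m_i/(√(2π) σ_i)) exp(-(x-μ_i)²/(2σ_i²))` and
`h_i(x) = (m_i (μ_i - x)/(2√(2π) σ_i³)) exp(-(x-μ_i)²/(2σ_i²))` are linearly independent,
provided the pairs `(μ_i, σ_i)` are pairwise distinct, `m_i ≠ 0` and `σ_i > 0`. -/
theorem stmt_7 {k : ℕ} (hk : 1 ≤ k) (μ σ m : Fin k → ℝ)
    (hσ : ∀ i, 0 < σ i) (hm : ∀ i, m i ≠ 0)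
    (hdist : ∀ i j, i ≠ j → (μ i, σ i) ≠ (μ j, σ j)) :
    LinearIndependent ℝ
      (Sum.elim
        (fun i : Fin k => fun x : ℝ => (1 / 2) * erfc ((μ i - x) / (Real.sqrt 2 * σ i)))
        (Sum.elim
          (fun i : Fin k => fun x : ℝ =>
            -(m i / (Real.sqrt (2 * Real.pi) * σ i)) * Real.exp (-(x - μ i) ^ 2 / (2 * (σ i) ^ 2)))
          (fun i : Fin k => fun x : ℝ =>
            (m i * (μ i - x) / (2 * Real.sqrt (2 * Real.pi) * (σ i) ^ 3))
              * Real.exp (-(x - μ i) ^ 2 / (2 * (σ i) ^ 2))))) :=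
  stmt_7_general μ σ m hσ hm hdist
end

section
/- Let P be a k-component Gaussian mixture on ℝ with pairwise-distinct components N(μ_i, σ_i²) and strictly positive mixture weights m_i. Then the only parameter vectors (m'_1, ..., m'_k, μ'_1, ..., μ'_k, σ'²_1, ..., σ'²_k) with m'_i ∈ [0,1], Σ m'_i = 1, σ'_i > 0, for which the mixture Σ_i m'_i N(μ'_i, σ'²_i) equals P as a distribution, are those obtained from (m_i, μ_i, σ_i²) by permuting the component indices. -/
/-!
Equal mixtures have equal densities, and these are continuous, so they agree everywhere.
Gaussian densities with distinct `(mean, variance)` are linearly independent: against the one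
with the largest variance, and among those the largest mean, every other one vanishes at `+∞`.
Hence both mixtures put the same total weight on each parameter. Each of the `k` distinct
components of the first mixture carries positive weight, so it is hit by some component of the
second one; as there are only `k` of those, this is a bijection.
-/

open MeasureTheory ProbabilityTheory Filter Function Topology
open scoped NNReal ENNReal

lemma tendsto_quadratic_atBot {A B C : ℝ} (h : A < 0 ∨ A = 0 ∧ B < 0) :
    Tendsto (fun x : ℝ => A * x ^ 2 + B * x + C) atTop atBot := by
  have hrw : (fun x : ℝ => A * x ^ 2 + B * x + C) = fun x => x * (A * x + B) + C := by
    funext x; ring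
  rw [hrw]
  refine tendsto_atBot_add_const_right _ C ?_
  rcases h with hA | ⟨rfl, hB⟩
  · exact tendsto_id.atTop_mul_atBot₀ <| tendsto_atBot_add_const_right _ B <|
      (tendsto_const_mul_atBot_of_neg hA).2 tendsto_id
  · simpa using (tendsto_mul_const_atBot_of_neg hB).2 tendsto_id

theorem LinearIndepOn.sum_fiber_eq_of_sum_smul_eq {ι ι' α R M : Type*} [Fintype ι] [Fintype ι']
    [DecidableEq α] [Ring R] [AddCommGroup M] [Module R M] {v : α → M} {s : Set α}
    (hv : LinearIndepOn R v s) {p : ι → α} {p' : ι' → α} (hp : ∀ i, p i ∈ s)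
    (hp' : ∀ i, p' i ∈ s) {c : ι → R} {c' : ι' → R}
    (h : ∑ i, c i • v (p i) = ∑ i, c' i • v (p' i)) (a : α) :
    ∑ i with p i = a, c i = ∑ i with p' i = a, c' i := by
  have hcomb := linearIndepOn_iffₛ.1 hv (∑ i, Finsupp.single (p i) (c i))
    (Submodule.sum_mem _ fun i _ => Finsupp.single_mem_supported R _ (hp i))
    (∑ i, Finsupp.single (p' i) (c' i))
    (Submodule.sum_mem _ fun i _ => Finsupp.single_mem_supported R _ (hp' i))
    (by simpa only [map_sum, Finsupp.linearCombination_single] using h)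
  simpa [Finsupp.finsetSum_apply, Finsupp.single_apply, Finset.sum_filter, eq_comm]
    using DFunLike.congr_fun hcomb a

theorem exists_perm_of_sum_fiber_eq {ι α M : Type*} [Fintype ι] [DecidableEq α] [AddCommMonoid M]
    {p p' : ι → α} {m m' : ι → M} (hp : Injective p) (hm : ∀ i, m i ≠ 0)
    (h : ∀ a, ∑ i with p' i = a, m' i = ∑ i with p i = a, m i) :
    ∃ π : Equiv.Perm ι, ∀ i, m' i = m (π i) ∧ p' i = p (π i) := by
  have hfiber : ∀ j, ∑ i with p' i = p j, m' i = m j := fun j => by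
    rw [h, Finset.sum_eq_single_of_mem j (by simp) fun j' hj' hne =>
      absurd (hp (Finset.mem_filter.1 hj').2) hne]
  have hhit : ∀ j, ∃ i, p' i = p j := fun j => by
    by_contra! hnone
    exact hm j (by rw [← hfiber j, Finset.sum_eq_zero]; simp [hnone])
  choose σ hσ using hhit
  have hσinj : Injective σ := fun j j' hjj' => hp (by rw [← hσ, ← hσ, hjj'])
  let e := Equiv.ofBijective σ (Finite.injective_iff_bijective.1 hσinj)
  refine ⟨e.symm, fun i => ?_⟩
  obtain ⟨j, rfl⟩ := e.surjective i
  rw [e.symm_apply_apply]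
  refine ⟨?_, hσ j⟩
  -- By injectivity of `p` and surjectivity of `σ`, the fibre of `p'` over `p j` is `{σ j}`.
  rw [← hfiber j]
  refine (Finset.sum_eq_single_of_mem (σ j) (by simp [hσ]) fun i hi hne => ?_).symm
  obtain ⟨j', rfl⟩ := e.surjective i
  simp only [Finset.mem_filter, e, Equiv.ofBijective_apply, hσ, hp.eq_iff] at hi
  exact absurd (hi.2 ▸ rfl) hne

theorem Continuous.eq_of_withDensity_ofReal_eq {α : Type*} [TopologicalSpace α]
    [MeasurableSpace α] [OpensMeasurableSpace α] {μ : Measure α} [SigmaFinite μ]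
    [μ.IsOpenPosMeasure] {f g : α → ℝ} (hf : Continuous f) (hg : Continuous g) (hf₀ : 0 ≤ f)
    (hg₀ : 0 ≤ g)
    (h : μ.withDensity (fun x => ENNReal.ofReal (f x)) = μ.withDensity fun x => ENNReal.ofReal (g x)) :
    f = g := by
  have hae := (withDensity_eq_iff_of_sigmaFinite hf.measurable.ennreal_ofReal.aemeasurable
    hg.measurable.ennreal_ofReal.aemeasurable).1 h
  refine (hf.ae_eq_iff_eq μ hg).1 ?_
  filter_upwards [hae] with x hx
  exact (ENNReal.ofReal_eq_ofReal_iff (hf₀ x) (hg₀ x)).1 hx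

namespace ProbabilityTheory

@[fun_prop]
lemma continuous_gaussianPDFReal (μ : ℝ) (v : ℝ≥0) : Continuous (gaussianPDFReal μ v) := by
  unfold gaussianPDFReal
  fun_prop

lemma tendsto_gaussianPDFReal_div_atTop {μ μ₀ : ℝ} {v v₀ : ℝ≥0} (hv : v ≠ 0) (hv₀ : v₀ ≠ 0)
    (hlt : toLex (v, μ) < toLex (v₀, μ₀)) :
    Tendsto (fun x => gaussianPDFReal μ v x / gaussianPDFReal μ₀ v₀ x) atTop (𝓝 0) := by
  have hvpos : (0 : ℝ) < v := by positivity
  have hv₀pos : (0 : ℝ) < v₀ := by positivity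
  set A : ℝ := 1 / (2 * v₀) - 1 / (2 * v)
  set B : ℝ := μ / v - μ₀ / v₀
  set C : ℝ := μ₀ ^ 2 / (2 * v₀) - μ ^ 2 / (2 * v)
  have hratio : ∀ x, gaussianPDFReal μ v x / gaussianPDFReal μ₀ v₀ x
      = (√(2 * Real.pi * v))⁻¹ / (√(2 * Real.pi * v₀))⁻¹ * Real.exp (A * x ^ 2 + B * x + C) := by
    intro x
    have : A * x ^ 2 + B * x + C = -(x - μ) ^ 2 / (2 * v) - -(x - μ₀) ^ 2 / (2 * v₀) := by
      simp only [A, B, C]; field_simp; ring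
    rw [this, Real.exp_sub, gaussianPDFReal, gaussianPDFReal, mul_div_mul_comm]
  have hlead : A < 0 ∨ A = 0 ∧ B < 0 := by
    rcases Prod.Lex.lt_iff.1 hlt with hlt | ⟨heq, hlt⟩
    · left
      have : (v : ℝ) < v₀ := hlt
      simp only [A, sub_neg]
      gcongr
    · right
      have heq : (v : ℝ) = v₀ := congrArg _ heq
      simp only [A, B, heq, sub_self, sub_neg, true_and]
      gcongr
      exact hlt
  simp_rw [hratio]
  simpa using (Real.tendsto_exp_atBot.comp (tendsto_quadratic_atBot (C := C) hlead)).const_mul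
    ((√(2 * Real.pi * v))⁻¹ / (√(2 * Real.pi * v₀))⁻¹)

theorem linearIndepOn_gaussianPDFReal :
    LinearIndepOn ℝ (fun q : ℝ × ℝ≥0 => gaussianPDFReal q.1 q.2) {q | q.2 ≠ 0} := by
  classical
  rw [linearIndepOn_iff_linearIndepOn_finset]
  intro t
  induction t using Finset.induction_on_max_value (fun q : ℝ × ℝ≥0 => toLex (q.2, q.1)) with
  | empty => simp
  | insert a t hat hmax ih =>
    intro hts
    rw [Finset.coe_insert, Set.insert_subset_iff] at hts
    rw [Finset.coe_insert, linearIndepOn_insert (by simpa using hat)]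
    refine ⟨ih hts.2, fun hspan => ?_⟩
    -- `a` has the lexicographically largest `(variance, mean)`, so after dividing
    -- `g a = ∑ c q • g q` by `g a` the right-hand side tends to `0`.
    obtain ⟨c, hc⟩ := (Submodule.mem_span_image_finset_iff_exists_fun' ℝ).1 hspan
    have hone : ∀ x, ∑ q ∈ t, c q * (gaussianPDFReal q.1 q.2 x / gaussianPDFReal a.1 a.2 x) = 1 := by
      intro x
      have hx := congrFun hc x
      simp only [Finset.sum_apply, Pi.smul_apply, smul_eq_mul] at hx
      simp_rw [← mul_div_assoc]
      rw [← Finset.sum_div, hx, div_self (gaussianPDFReal_pos _ _ _ hts.1).ne']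
    have hzero : Tendsto (fun x => ∑ q ∈ t, c q * (gaussianPDFReal q.1 q.2 x /
        gaussianPDFReal a.1 a.2 x)) atTop (𝓝 0) := by
      rw [← Finset.sum_const_zero (s := t), ← Finset.sum_const_zero (s := t)]
      refine tendsto_finsetSum _ fun q hq => ?_
      have hlt : toLex (q.2, q.1) < toLex (a.2, a.1) := (hmax q hq).lt_of_ne fun h => by
        simp only [toLex_inj, Prod.mk.injEq] at h
        exact hat (Prod.ext h.2 h.1 ▸ hq)
      simpa using (tendsto_gaussianPDFReal_div_atTop (hts.2 hq) hts.1 hlt).const_mul (c q)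
    simp_rw [hone] at hzero
    exact one_ne_zero (tendsto_nhds_unique tendsto_const_nhds hzero)

lemma sum_smul_gaussianReal_eq_withDensity {ι : Type*} [Fintype ι] {w μ : ι → ℝ} {v : ι → ℝ≥0}
    (hw : ∀ i, 0 ≤ w i) (hv : ∀ i, v i ≠ 0) :
    ∑ i, ENNReal.ofReal (w i) • gaussianReal (μ i) (v i)
      = volume.withDensity fun x => ENNReal.ofReal ((∑ i, w i • gaussianPDFReal (μ i) (v i)) x) := by
  have hmeas : ∀ i, Measurable fun x => ENNReal.ofReal (w i * gaussianPDFReal (μ i) (v i) x) :=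
    fun i => ((measurable_gaussianPDFReal _ _).const_mul _).ennreal_ofReal
  calc ∑ i, ENNReal.ofReal (w i) • gaussianReal (μ i) (v i)
      = ∑ i, volume.withDensity fun x => ENNReal.ofReal (w i * gaussianPDFReal (μ i) (v i) x) := by
        refine Finset.sum_congr rfl fun i _ => ?_
        rw [gaussianReal_of_var_ne_zero _ (hv i), ← withDensity_smul _ (measurable_gaussianPDF _ _)]
        congr 1
        funext x
        simp [gaussianPDF, ENNReal.ofReal_mul (hw i)]
    _ = _ := by
        rw [← Measure.sum_fintype, ← withDensity_tsum hmeas]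
        congr 1
        funext x
        simp only [tsum_fintype, Finset.sum_apply, Pi.smul_apply, smul_eq_mul]
        rw [ENNReal.ofReal_sum_of_nonneg fun i _ =>
          mul_nonneg (hw i) (gaussianPDFReal_nonneg _ _ _)]

lemma sum_smul_gaussianPDFReal_eq_of_sum_smul_gaussianReal_eq {ι ι' : Type*} [Fintype ι]
    [Fintype ι'] {w μ : ι → ℝ} {v : ι → ℝ≥0} {w' μ' : ι' → ℝ} {v' : ι' → ℝ≥0}
    (hw : ∀ i, 0 ≤ w i) (hv : ∀ i, v i ≠ 0) (hw' : ∀ i, 0 ≤ w' i) (hv' : ∀ i, v' i ≠ 0)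
    (h : ∑ i, ENNReal.ofReal (w i) • gaussianReal (μ i) (v i)
      = ∑ i, ENNReal.ofReal (w' i) • gaussianReal (μ' i) (v' i)) :
    ∑ i, w i • gaussianPDFReal (μ i) (v i) = ∑ i, w' i • gaussianPDFReal (μ' i) (v' i) := by
  rw [sum_smul_gaussianReal_eq_withDensity hw hv,
    sum_smul_gaussianReal_eq_withDensity hw' hv'] at h
  exact Continuous.eq_of_withDensity_ofReal_eq (μ := volume) (by rw [Finset.sum_fn]; fun_prop)
    (by rw [Finset.sum_fn]; fun_prop)
    (Finset.sum_nonneg fun i _ => smul_nonneg (hw i) (gaussianPDFReal_nonneg _ _))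
    (Finset.sum_nonneg fun i _ => smul_nonneg (hw' i) (gaussianPDFReal_nonneg _ _)) h

end ProbabilityTheory

theorem stmt_16_general {k : ℕ} (m μ v : Fin k → ℝ)
    (hm : ∀ i, 0 < m i)
    (hv : ∀ i, 0 < v i)
    (hdist : ∀ i j, i ≠ j → (μ i, v i) ≠ (μ j, v j))
    (m' μ' v' : Fin k → ℝ)
    (hm' : ∀ i, m' i ∈ Set.Icc (0 : ℝ) 1)
    (hv' : ∀ i, 0 < v' i)
    (heq : (∑ i, ENNReal.ofReal (m' i) • gaussianReal (μ' i) ((v' i).toNNReal))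
        = (∑ i, ENNReal.ofReal (m i) • gaussianReal (μ i) ((v i).toNNReal))) :
    ∃ π : Equiv.Perm (Fin k), ∀ i, m' i = m (π i) ∧ μ' i = μ (π i) ∧ v' i = v (π i) := by
  have hvar : ∀ {u : ℝ}, 0 < u → u.toNNReal ≠ 0 := fun hu => (Real.toNNReal_pos.2 hu).ne'
  have hdens := sum_smul_gaussianPDFReal_eq_of_sum_smul_gaussianReal_eq (fun i => (hm' i).1)
    (fun i => hvar (hv' i)) (fun i => (hm i).le) (fun i => hvar (hv i)) heq
  have hfiber := linearIndepOn_gaussianPDFReal.sum_fiber_eq_of_sum_smul_eq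
    (p := fun i => (μ' i, (v' i).toNNReal)) (p' := fun i => (μ i, (v i).toNNReal))
    (fun i => hvar (hv' i)) (fun i => hvar (hv i)) hdens
  have hinj : Injective fun i => (μ i, (v i).toNNReal) := fun i j hij => by
    by_contra hne
    rw [Prod.mk.injEq, Real.toNNReal_eq_toNNReal_iff (hv i).le (hv j).le] at hij
    exact hdist i j hne (Prod.ext hij.1 hij.2)
  obtain ⟨π, hπ⟩ := exists_perm_of_sum_fiber_eq hinj (fun i => (hm i).ne') hfiber
  refine ⟨π, fun i => ⟨(hπ i).1, congrArg Prod.fst (hπ i).2, ?_⟩⟩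
  exact (Real.toNNReal_eq_toNNReal_iff (hv' i).le (hv (π i)).le).1 (congrArg Prod.snd (hπ i).2)

/-- Identifiability of one-dimensional Gaussian mixtures: if a `k`-component
Gaussian mixture has pairwise-distinct components `N(μ_i, v_i)` and strictly positive weights
`m_i`, then any parameter vector `(m'_i, μ'_i, v'_i)` with `m'_i ∈ [0,1]`, `Σ m'_i = 1`,
`v'_i > 0` producing the same mixture distribution is a permutation of `(m_i, μ_i, v_i)`. -/
theorem stmt_16 {k : ℕ} (m μ v : Fin k → ℝ)
    (hm : ∀ i, 0 < m i) (hmsum : ∑ i, m i = 1)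
    (hv : ∀ i, 0 < v i)
    (hdist : ∀ i j, i ≠ j → (μ i, v i) ≠ (μ j, v j))
    (m' μ' v' : Fin k → ℝ)
    (hm' : ∀ i, m' i ∈ Set.Icc (0 : ℝ) 1) (hm'sum : ∑ i, m' i = 1)
    (hv' : ∀ i, 0 < v' i)
    (heq : (∑ i, ENNReal.ofReal (m' i) • gaussianReal (μ' i) ((v' i).toNNReal))
        = (∑ i, ENNReal.ofReal (m i) • gaussianReal (μ i) ((v i).toNNReal))) :
    ∃ π : Equiv.Perm (Fin k), ∀ i, m' i = m (π i) ∧ μ' i = μ (π i) ∧ v' i = v (π i) :=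
  stmt_16_general m μ v hm hv hdist m' μ' v' hm' hv' heq
end
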